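/- arXiv:1604.05302 — 4 statements merged into one kernel-verified Lean document; each statement's English description precedes it below -/
import Mathlib

section
/- Let 0 ≤ a ≤ m ≤ r with m > 0 and 1 − 2m/r + a²/r² > 0. Then r[ −(1 + a²/r² + 2ma²/r³)^{1/2}(1 − 2m/r + a²/r²)^{1/2} + (1 + (1 + a²/r² + 2ma²/r³)^{1/2})/2 ] > 0. -/
open Real

/-! In units of `r`, with `u = a/r` and `v = m/r`, the product of the two radicands is
`(1 + u² + 2vu²)(1 - 2v + u²) ≤ (1 + u²)² - 4v² ≤ 1 - v² < 1`, so the product of the square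
roots is below `1`, while `(1 + √P)/2 ≥ 1` because the first radicand `P` is at least `1`. -/

lemma kerr_radicand_mul_lt_one {u v : ℝ} (hu : 0 ≤ u) (huv : u ≤ v) (hv1 : v ≤ 1) (hv : 0 < v)
    (hΔ : 0 ≤ 1 - 2*v + u^2) :
    (1 + u^2 + 2*v*u^2) * (1 - 2*v + u^2) < 1 := by
  have hu1 : u ≤ 1 := huv.trans hv1
  have hu2 : u^2 ≤ 1 := pow_le_one₀ hu hu1
  have huv2 : u^2 ≤ v^2 := pow_le_pow_left₀ hu huv 2
  have hu4 : u^4 ≤ u^2 := pow_le_pow_of_le_one hu hu1 (by norm_num)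
  calc (1 + u^2 + 2*v*u^2) * (1 - 2*v + u^2)
      ≤ (1 + u^2 + 2*v) * (1 - 2*v + u^2) := by
        have : v*u^2 ≤ v := mul_le_of_le_one_right hv.le hu2
        exact mul_le_mul_of_nonneg_right (by linarith) hΔ
    _ = (1 + u^2)^2 - 4*v^2 := by ring
    _ ≤ 1 - v^2 := by linarith
    _ < 1 := by linarith [pow_pos hv 2]

lemma neg_sqrt_mul_sqrt_add_half_pos {x y : ℝ} (hx : 1 ≤ x) (hxy : x * y < 1) :
    0 < -(√x * √y) + (1 + √x) / 2 := by
  have hprod : √x * √y < 1 := by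
    rw [← Real.sqrt_mul (zero_le_one.trans hx)]
    exact (Real.sqrt_lt' one_pos).mpr (by rwa [one_pow])
  have hsx : 1 ≤ √x := Real.one_le_sqrt.mpr hx
  linarith

/-- key inequality showing K(π/2) > 0 for Kerr. -/
theorem stmt_9 (a m r : ℝ) (ha : 0 ≤ a) (ham : a ≤ m) (hmr : m ≤ r) (hm : 0 < m)
    (hΔ : 0 < 1 - 2*m/r + a^2/r^2) :
    0 < r * (-(Real.sqrt (1 + a^2/r^2 + 2*m*a^2/r^3) * Real.sqrt (1 - 2*m/r + a^2/r^2))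
        + (1 + Real.sqrt (1 + a^2/r^2 + 2*m*a^2/r^3)) / 2) := by
  have hr : 0 < r := hm.trans_le hmr
  have hP : 1 + a^2/r^2 + 2*m*a^2/r^3 = 1 + (a/r)^2 + 2*(m/r)*(a/r)^2 := by ring
  have hΔ' : 1 - 2*m/r + a^2/r^2 = 1 - 2*(m/r) + (a/r)^2 := by ring
  rw [hΔ'] at hΔ
  rw [hP, hΔ']
  refine mul_pos hr (neg_sqrt_mul_sqrt_add_half_pos ?_ ?_)
  · have : 0 ≤ (a/r)^2 + 2*(m/r)*(a/r)^2 := by positivity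
    linarith
  · exact kerr_radicand_mul_lt_one (by positivity) (by gcongr) ((div_le_one hr).mpr hmr)
      (by positivity) hΔ.le
end

section
/- For the Minkowski spacetime data H = r² sin²θ, Σ = r, R = 1, the second variation of the CNT quasi-local energy at (0,0) in the direction (u, rv) equals (r/2)∫₀^π ( −u² − v²/2 + u_θ v ) sin θ dθ, and evaluated at the constant variation (u,v) = (1,0) it equals −(r/2)∫₀^π sin θ dθ = −r < 0. -/
open Real

lemma stmt_11_aux (r : ℝ) (hr : 0 < r) (u v : ℝ → ℝ) {θ : ℝ}
    (hθ : θ ∈ Set.Ioo (0:ℝ) π) :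
    (-(deriv (fun ρ => Real.sqrt (ρ^2 * Real.sin θ ^ 2) * ρ) r) / (2 * 1)
        * ((u θ)^2 + (v θ)^2)
      + (r * Real.sqrt (1 -
          (deriv (fun t => r^2 * Real.sin t ^ 2) θ)^2
            / (4 * (r^2 * Real.sin θ ^ 2) * r^2))) / 2 * (v θ)^2
      + Real.sqrt (r^2 * Real.sin θ ^ 2) * deriv u θ * v θ)
    = r * ((-(u θ)^2 - (v θ)^2 / 2 + deriv u θ * v θ) * Real.sin θ) := by
  have hs : 0 < Real.sin θ := Real.sin_pos_of_pos_of_lt_pi hθ.1 hθ.2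
  have h1 : deriv (fun ρ => Real.sqrt (ρ^2 * Real.sin θ ^ 2) * ρ) r
      = 2 * r * Real.sin θ := by
    have hev : (fun ρ => Real.sqrt (ρ^2 * Real.sin θ ^ 2) * ρ)
        =ᶠ[nhds r] (fun ρ => Real.sin θ * ρ^2) := by
      filter_upwards [eventually_gt_nhds hr] with ρ hρ
      rw [show ρ^2 * Real.sin θ ^ 2 = (ρ * Real.sin θ)^2 by ring,
        Real.sqrt_sq (by positivity)]
      ring
    rw [hev.deriv_eq]
    have : HasDerivAt (fun ρ : ℝ => Real.sin θ * ρ^2)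
        (Real.sin θ * (2 * r^1)) r := (hasDerivAt_pow 2 r).const_mul _
    rw [this.deriv]; ring
  have h2 : deriv (fun t => r^2 * Real.sin t ^ 2) θ
      = r^2 * (2 * Real.sin θ * Real.cos θ) := by
    have : HasDerivAt (fun t => r^2 * Real.sin t ^ 2)
        (r^2 * (2 * Real.sin θ ^ 1 * Real.cos θ)) θ :=
      (((Real.hasDerivAt_sin θ).pow 2)).const_mul _
    rw [this.deriv]; ring
  have h3 : Real.sqrt (1 - (r^2 * (2 * Real.sin θ * Real.cos θ))^2
      / (4 * (r^2 * Real.sin θ ^ 2) * r^2)) = Real.sin θ := by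
    have hfrac : (r^2 * (2 * Real.sin θ * Real.cos θ))^2
        / (4 * (r^2 * Real.sin θ ^ 2) * r^2) = Real.cos θ ^ 2 := by
      field_simp
      ring
    rw [hfrac, show (1 : ℝ) - Real.cos θ ^ 2 = Real.sin θ ^ 2 by
      rw [Real.sin_sq], Real.sqrt_sq hs.le]
  have h4 : Real.sqrt (r^2 * Real.sin θ ^ 2) = r * Real.sin θ := by
    rw [show r^2 * Real.sin θ ^ 2 = (r * Real.sin θ)^2 by ring,
      Real.sqrt_sq (by positivity)]
  rw [h1, h2, h3, h4]
  ring

/-- for Minkowski data H = r²sin²θ, Σ = r, R = 1, the second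
variation of the CNT energy at (0,0) in direction (u, rv) equals
(r/2)∫₀^π(−u² − v²/2 + u_θ v) sin θ dθ, and at (u,v) = (1,0) it equals
−(r/2)∫₀^π sin θ dθ = −r < 0. -/
theorem stmt_11 (r : ℝ) (hr : 0 < r) (u v : ℝ → ℝ)
    (hu : ContDiff ℝ (⊤ : ℕ∞) u) (hv : ContDiff ℝ (⊤ : ℕ∞) v) :
    ((1/2) * ∫ θ in (0:ℝ)..π,
        (-(deriv (fun ρ => Real.sqrt (ρ^2 * Real.sin θ ^ 2) * ρ) r) / (2 * 1)
            * ((u θ)^2 + (v θ)^2)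
          + (r * Real.sqrt (1 -
              (deriv (fun t => r^2 * Real.sin t ^ 2) θ)^2
                / (4 * (r^2 * Real.sin θ ^ 2) * r^2))) / 2 * (v θ)^2
          + Real.sqrt (r^2 * Real.sin θ ^ 2) * deriv u θ * v θ))
      = (r/2) * ∫ θ in (0:ℝ)..π,
          (-(u θ)^2 - (v θ)^2 / 2 + deriv u θ * v θ) * Real.sin θ ∧
    ((r/2) * ∫ θ in (0:ℝ)..π,
        (-(1:ℝ)^2 - (0:ℝ)^2 / 2 + (0:ℝ) * 0) * Real.sin θ)
      = -(r/2) * (∫ θ in (0:ℝ)..π, Real.sin θ) ∧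
    (-(r/2) * (∫ θ in (0:ℝ)..π, Real.sin θ)) = -r ∧ (-r : ℝ) < 0 := by
  refine ⟨?_, ?_, ?_, by linarith⟩
  · have key : (∫ θ in (0:ℝ)..π,
        (-(deriv (fun ρ => Real.sqrt (ρ^2 * Real.sin θ ^ 2) * ρ) r) / (2 * 1)
            * ((u θ)^2 + (v θ)^2)
          + (r * Real.sqrt (1 -
              (deriv (fun t => r^2 * Real.sin t ^ 2) θ)^2
                / (4 * (r^2 * Real.sin θ ^ 2) * r^2))) / 2 * (v θ)^2
          + Real.sqrt (r^2 * Real.sin θ ^ 2) * deriv u θ * v θ))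
        = ∫ θ in (0:ℝ)..π,
            r * ((-(u θ)^2 - (v θ)^2 / 2 + deriv u θ * v θ) * Real.sin θ) := by
      apply intervalIntegral.integral_congr_ae
      have hπ : ∀ᵐ x : ℝ ∂MeasureTheory.volume, x ≠ π := by
        rw [MeasureTheory.ae_iff]
        simpa using MeasureTheory.measure_singleton (μ := MeasureTheory.volume) π
      filter_upwards [hπ] with x hx hxI
      rw [Set.uIoc_of_le Real.pi_pos.le] at hxI
      exact stmt_11_aux r hr u v ⟨hxI.1, lt_of_le_of_ne hxI.2 hx⟩
    rw [key, intervalIntegral.integral_const_mul]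
    ring
  · have : ∀ θ : ℝ, (-(1:ℝ)^2 - (0:ℝ)^2 / 2 + (0:ℝ) * 0) * Real.sin θ
        = -Real.sin θ := by intro θ; ring
    simp_rw [this, intervalIntegral.integral_neg]
    ring
  · rw [integral_sin]
    norm_num
end

section
/- Let u(θ) = −(2/3)cos²θ and v(θ) = sin θ cos θ. Then (r/2)∫₀^π ( −u² − v²/2 + u_θ v ) sin θ dθ = r/45 > 0 for every r > 0. -/
open Real

lemma deriv_u (θ : ℝ) :
    deriv (fun t => -(2/3) * Real.cos t ^ 2) θ = 4/3 * Real.sin θ * Real.cos θ := by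
  have h : HasDerivAt (fun t => -(2/3) * Real.cos t ^ 2)
      (-(2/3) * (2 * Real.cos θ ^ 1 * (-Real.sin θ))) θ :=
    ((Real.hasDerivAt_cos θ).pow 2).const_mul (-(2/3))
  rw [h.deriv]; ring

/-- with u = −(2/3)cos²θ, v = sin θ cos θ,
(r/2)∫₀^π(−u² − v²/2 + u_θ v) sin θ dθ = r/45 > 0 for every r > 0. -/
theorem stmt_12 (r : ℝ) (hr : 0 < r) :
    ((r/2) * ∫ θ in (0:ℝ)..π,
        (-(-(2/3) * Real.cos θ ^ 2)^2 - (Real.sin θ * Real.cos θ)^2 / 2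
          + deriv (fun t => -(2/3) * Real.cos t ^ 2) θ * (Real.sin θ * Real.cos θ))
          * Real.sin θ)
      = r / 45 ∧ 0 < r / 45 := by
  have key : (∫ θ in (0:ℝ)..π,
        (-(-(2/3) * Real.cos θ ^ 2)^2 - (Real.sin θ * Real.cos θ)^2 / 2
          + deriv (fun t => -(2/3) * Real.cos t ^ 2) θ * (Real.sin θ * Real.cos θ))
          * Real.sin θ) = 2/45 := by
    have heq : (fun θ : ℝ =>
        (-(-(2/3) * Real.cos θ ^ 2)^2 - (Real.sin θ * Real.cos θ)^2 / 2
          + deriv (fun t => -(2/3) * Real.cos t ^ 2) θ * (Real.sin θ * Real.cos θ))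
          * Real.sin θ) = fun θ : ℝ =>
        (-(-(2/3) * Real.cos θ ^ 2)^2 - (Real.sin θ * Real.cos θ)^2 / 2
          + (4/3 * Real.sin θ * Real.cos θ) * (Real.sin θ * Real.cos θ))
          * Real.sin θ := by
      funext θ; rw [deriv_u]
    rw [heq]
    have hderiv : ∀ θ ∈ Set.uIcc (0:ℝ) π, HasDerivAt
        (fun t : ℝ => -(5/18) * Real.cos t ^ 3 + (23/90) * Real.cos t ^ 5)
        ((-(-(2/3) * Real.cos θ ^ 2)^2 - (Real.sin θ * Real.cos θ)^2 / 2
          + (4/3 * Real.sin θ * Real.cos θ) * (Real.sin θ * Real.cos θ))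
          * Real.sin θ) θ := by
      intro θ _
      have h1 : HasDerivAt (fun t : ℝ => -(5/18) * Real.cos t ^ 3 + (23/90) * Real.cos t ^ 5)
          (-(5/18) * (3 * Real.cos θ ^ 2 * (-Real.sin θ))
            + (23/90) * (5 * Real.cos θ ^ 4 * (-Real.sin θ))) θ :=
        (((Real.hasDerivAt_cos θ).pow 3).const_mul (-(5/18))).add
          (((Real.hasDerivAt_cos θ).pow 5).const_mul (23/90))
      convert h1 using 1
      have hs : Real.sin θ ^ 2 = 1 - Real.cos θ ^ 2 := Real.sin_sq θ
      linear_combination (5/6 * Real.cos θ^2 * Real.sin θ) * hs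
    rw [intervalIntegral.integral_eq_sub_of_hasDerivAt hderiv (by
      apply Continuous.intervalIntegrable; continuity)]
    simp [Real.cos_pi]
    norm_num
  rw [key]
  constructor
  · ring
  · positivity
end

section
/- Let P, M : (0,π) → ℝ be continuous with P > 0, and let H : [0,π] → ℝ with √H smooth, √H > 0 on (0,π) and vanishing at 0, π. Suppose there exists θ₀ ∈ [0,π] with K(θ₀) > 0, where K(θ) = −P(θ)/2 + (M(θ)/2)sin²θ + (H_θ/(4√H)) cos θ sin θ + √H/2 (extended continuously to the endpoints). Then the quadratic form Q(u,v) = ∫₀^π ( −(P/2)(u²+v²) + (M/2)v² + √H u_θ v ) dθ is indefinite: it takes both positive and negative values on smooth pairs (u,v) with v(0)=v(π)=0. -/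
open Real MeasureTheory intervalIntegral

set_option maxHeartbeats 2000000 in
/-- abstract saddle-point theorem: under the stated hypotheses on
P, M and s = √H, if K(θ₀) > 0 for some θ₀ ∈ [0,π], then the quadratic form
Q(u,v) = ∫₀^π(−(P/2)(u²+v²) + (M/2)v² + √H u_θ v)dθ takes both positive and
negative values on smooth pairs (u,v) with v(0) = v(π) = 0. -/
theorem stmt_15 (P M s K : ℝ → ℝ)
    (hP : ContinuousOn P (Set.Icc (0:ℝ) π))
    (hM : ContinuousOn M (Set.Icc (0:ℝ) π))
    (hPpos : ∀ θ ∈ Set.Ioo (0:ℝ) π, 0 < P θ)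
    (hs : ContDiff ℝ (⊤ : ℕ∞) s)
    (hspos : ∀ θ ∈ Set.Ioo (0:ℝ) π, 0 < s θ)
    (hs0 : s 0 = 0) (hsπ : s π = 0)
    (hKcont : ContinuousOn K (Set.Icc (0:ℝ) π))
    (hKdef : ∀ θ ∈ Set.Ioo (0:ℝ) π,
      K θ = -P θ / 2 + (M θ / 2) * Real.sin θ ^ 2
        + (deriv (fun t => (s t)^2) θ / (4 * s θ)) * Real.cos θ * Real.sin θ
        + s θ / 2)
    (θ₀ : ℝ) (hθ₀ : θ₀ ∈ Set.Icc (0:ℝ) π) (hK₀ : 0 < K θ₀) :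
    (∃ u v : ℝ → ℝ, ContDiff ℝ (⊤ : ℕ∞) u ∧ ContDiff ℝ (⊤ : ℕ∞) v ∧ v 0 = 0 ∧ v π = 0 ∧
        0 < ∫ θ in (0:ℝ)..π,
          (-(P θ / 2) * ((u θ)^2 + (v θ)^2) + (M θ / 2) * (v θ)^2
            + s θ * deriv u θ * v θ)) ∧
    (∃ u v : ℝ → ℝ, ContDiff ℝ (⊤ : ℕ∞) u ∧ ContDiff ℝ (⊤ : ℕ∞) v ∧ v 0 = 0 ∧ v π = 0 ∧
        (∫ θ in (0:ℝ)..π,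
          (-(P θ / 2) * ((u θ)^2 + (v θ)^2) + (M θ / 2) * (v θ)^2
            + s θ * deriv u θ * v θ)) < 0) := by
  have hπ : (0:ℝ) < π := Real.pi_pos
  constructor
  · -- POSITIVE PART
    set ε : ℝ := K θ₀ / 2 with hεdef
    have hε : 0 < ε := by rw [hεdef]; linarith
    -- Step 1: find 0 < a < b < π with K > ε on [a, b]
    obtain ⟨δ, hδ, hball⟩ := Metric.continuousWithinAt_iff.mp (hKcont θ₀ hθ₀) ε hε
    set L : ℝ := max 0 (θ₀ - δ) with hLdef
    set R : ℝ := min π (θ₀ + δ) with hRdef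
    have hθ₀0 := hθ₀.1
    have hθ₀π := hθ₀.2
    have hL0 : 0 ≤ L := le_max_left _ _
    have hRπ : R ≤ π := min_le_left _ _
    have hLδ : θ₀ - δ ≤ L := le_max_right _ _
    have hRδ : R ≤ θ₀ + δ := min_le_right _ _
    have hLR : L < R := by
      rw [hLdef, hRdef]
      exact max_lt (lt_min hπ (by linarith)) (lt_min (by linarith) (by linarith))
    set a : ℝ := (3 * L + R) / 4 with hadef
    set b : ℝ := (L + 3 * R) / 4 with hbdef
    have hab : a < b := by rw [hadef, hbdef]; linarith
    have ha0 : 0 < a := by rw [hadef]; linarith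
    have hbπ : b < π := by rw [hbdef]; linarith
    have hKab : ∀ θ ∈ Set.Icc a b, ε < K θ := by
      intro θ hθ
      have h1 : L < θ := by have := hθ.1; rw [hadef] at this; linarith
      have h2 : θ < R := by have := hθ.2; rw [hbdef] at this; linarith
      have hmem : θ ∈ Set.Icc (0:ℝ) π := ⟨by linarith, by linarith⟩
      have hdist : dist θ θ₀ < δ := by
        rw [Real.dist_eq, abs_sub_lt_iff]
        exact ⟨by linarith, by linarith⟩
      have := hball hmem hdist
      rw [Real.dist_eq, abs_sub_lt_iff] at this
      have h3 := this.2
      rw [hεdef] at h3 ⊢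
      linarith
    -- Step 2: bound for K, choice of σ, Gaussian f
    obtain ⟨C₀, hC₀⟩ := isCompact_Icc.exists_bound_of_continuousOn hKcont
    set C : ℝ := max C₀ 1 with hCdef
    have hC : (0:ℝ) < C := lt_of_lt_of_le one_pos (le_max_right _ _)
    have hCb : ∀ θ ∈ Set.Icc (0:ℝ) π, |K θ| ≤ C := fun θ hθ =>
      le_trans (hC₀ θ hθ) (le_max_left _ _)
    set m : ℝ := (a + b) / 2 with hmdef
    set r : ℝ := (b - a) / 2 with hrdef
    have hr : 0 < r := by rw [hrdef]; linarith
    have hE2 : (0:ℝ) < Real.exp 2 := Real.exp_pos 2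
    set σ : ℝ := min r (ε * r ^ 2 / (2 * C * π * Real.exp 2)) with hσdef
    have hσ : 0 < σ := by
      rw [hσdef, lt_min_iff]
      exact ⟨hr, by positivity⟩
    have hσr : σ ≤ r := min_le_left _ _
    have hσ2 : σ ≤ ε * r ^ 2 / (2 * C * π * Real.exp 2) := min_le_right _ _
    set f : ℝ → ℝ := fun θ => Real.exp (-((θ - m) ^ 2 / σ ^ 2)) with hfdef
    have hfsmooth : ContDiff ℝ (⊤ : ℕ∞) f :=
      (((contDiff_id.sub contDiff_const).pow 2).div_const _).neg.exp
    have hfpos : ∀ θ, 0 < f θ := fun θ => Real.exp_pos _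
    have hfle1 : ∀ θ : ℝ, f θ ≤ 1 := by
      intro θ
      rw [hfdef]
      apply Real.exp_le_one_iff.mpr
      have : (0:ℝ) ≤ (θ - m) ^ 2 / σ ^ 2 := by positivity
      linarith
    -- Step 3: u, v, g
    set u : ℝ → ℝ := fun θ => -(f θ * Real.cos θ) with hudef
    set v : ℝ → ℝ := fun θ => f θ * Real.sin θ with hvdef
    set g : ℝ → ℝ := fun θ => s θ * f θ ^ 2 * Real.cos θ * Real.sin θ with hgdef
    have husmooth : ContDiff ℝ (⊤ : ℕ∞) u := (hfsmooth.mul Real.contDiff_cos).neg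
    have hvsmooth : ContDiff ℝ (⊤ : ℕ∞) v := hfsmooth.mul Real.contDiff_sin
    have hgsmooth : ContDiff ℝ (⊤ : ℕ∞) g :=
      ((hs.mul (hfsmooth.pow 2)).mul Real.contDiff_cos).mul Real.contDiff_sin
    refine ⟨u, v, husmooth, hvsmooth, by simp [hvdef], by simp [hvdef], ?_⟩
    -- Step 4: pointwise identity on (0, π)
    have hEq : ∀ θ ∈ Set.Ioo (0:ℝ) π,
        -(P θ / 2) * ((u θ)^2 + (v θ)^2) + (M θ / 2) * (v θ)^2
            + s θ * deriv u θ * v θ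
        = K θ * f θ ^ 2 - (1/2) * deriv g θ := by
      intro θ hθIoo
      have hsθ : 0 < s θ := hspos θ hθIoo
      have hfd : HasDerivAt f (deriv f θ) θ :=
        ((hfsmooth.differentiable (by simp)) θ).hasDerivAt
      have hsd : HasDerivAt s (deriv s θ) θ :=
        ((hs.differentiable (by simp)) θ).hasDerivAt
      have hcos := Real.hasDerivAt_cos θ
      have hsin := Real.hasDerivAt_sin θ
      have hu' : deriv u θ = -(deriv f θ * Real.cos θ + f θ * (-Real.sin θ)) :=
        ((hfd.mul hcos).neg).deriv
      have hg' : deriv g θ =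
          ((deriv s θ * f θ ^ 2 + s θ * (↑(2:ℕ) * f θ ^ (2-1) * deriv f θ)) * Real.cos θ
            + s θ * f θ ^ 2 * (-Real.sin θ)) * Real.sin θ
            + s θ * f θ ^ 2 * Real.cos θ * Real.cos θ :=
        (((hsd.mul (hfd.pow 2)).mul hcos).mul hsin).deriv
      have hs2 : deriv (fun t => (s t)^2) θ = 2 * s θ * deriv s θ := by
        have h : deriv (fun t => (s t)^2) θ = ↑(2:ℕ) * s θ ^ (2-1) * deriv s θ := (hsd.pow 2).deriv
        rw [h]; push_cast; ring
      have hK := hKdef θ hθIoo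
      rw [hs2] at hK
      have hdiv : 2 * s θ * deriv s θ / (4 * s θ) = deriv s θ / 2 := by
        field_simp
        ring
      rw [hdiv] at hK
      simp only [hudef, hvdef]
      rw [hu', hg', hK]
      have hsc := Real.sin_sq_add_cos_sq θ
      push_cast
      linear_combination ((s θ - P θ) / 2 * f θ ^ 2) * hsc
    -- Step 5: replace the integrand a.e.
    have hπae : ∀ᵐ (x : ℝ) ∂(volume : Measure ℝ), x ≠ π := by
      rw [MeasureTheory.ae_iff]
      have h : {x : ℝ | ¬ x ≠ π} = {π} := by ext x; simp
      rw [h]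
      exact measure_singleton π
    have hae : ∀ᵐ (x : ℝ) ∂(volume : Measure ℝ), x ∈ Set.uIoc (0:ℝ) π →
        (-(P x / 2) * ((u x)^2 + (v x)^2) + (M x / 2) * (v x)^2
            + s x * deriv u x * v x)
        = K x * f x ^ 2 - (1/2) * deriv g x := by
      filter_upwards [hπae] with x hx hmem
      rw [Set.uIoc_of_le hπ.le, Set.mem_Ioc] at hmem
      exact hEq x ⟨hmem.1, lt_of_le_of_ne hmem.2 hx⟩
    rw [intervalIntegral.integral_congr_ae hae]
    -- Step 6: the derivative term integrates to zero
    have hKfcont : ContinuousOn (fun θ => K θ * f θ ^ 2) (Set.Icc (0:ℝ) π) :=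
      hKcont.mul ((hfsmooth.continuous.pow 2).continuousOn)
    have hKfint : IntervalIntegrable (fun θ => K θ * f θ ^ 2) volume 0 π :=
      (hKfcont.mono (by rw [Set.uIcc_of_le hπ.le])).intervalIntegrable
    have hg'cont : Continuous (deriv g) := hgsmooth.continuous_deriv (by simp)
    have hg'int : IntervalIntegrable (deriv g) volume 0 π := hg'cont.intervalIntegrable 0 π
    have hFTC : (∫ θ in (0:ℝ)..π, deriv g θ) = g π - g 0 :=
      integral_deriv_eq_sub (fun x _ => (hgsmooth.differentiable (by simp)) x) hg'int
    have hgπ : g π = 0 := by simp [hgdef, Real.sin_pi]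
    have hg0 : g 0 = 0 := by simp [hgdef, hs0]
    have hsplit : (∫ θ in (0:ℝ)..π, (K θ * f θ ^ 2 - (1/2) * deriv g θ))
        = (∫ θ in (0:ℝ)..π, K θ * f θ ^ 2) - (1/2) * ∫ θ in (0:ℝ)..π, deriv g θ := by
      rw [intervalIntegral.integral_sub hKfint (hg'int.const_mul (1/2)),
        intervalIntegral.integral_const_mul]
    rw [hsplit, hFTC, hgπ, hg0]
    rw [show (0:ℝ) - 0 = 0 by ring, mul_zero, sub_zero]
    -- Step 7: positivity of ∫ K f²
    have hσsq : (0:ℝ) < σ ^ 2 := by positivity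
    have hr2 : (0:ℝ) < r ^ 2 := by positivity
    have hfin : ∀ θ : ℝ, (θ - m) ^ 2 ≤ σ ^ 2 → Real.exp (-1) ≤ f θ := by
      intro θ h
      rw [hfdef]
      apply Real.exp_le_exp.mpr
      rw [neg_le_neg_iff, div_le_one hσsq]
      exact h
    have hE : Real.exp (-(r ^ 2 / σ ^ 2)) ≤ σ ^ 2 / r ^ 2 := by
      have hx : 0 < r ^ 2 / σ ^ 2 := by positivity
      have h1 : r ^ 2 / σ ^ 2 ≤ Real.exp (r ^ 2 / σ ^ 2) := by
        linarith [Real.add_one_le_exp (r ^ 2 / σ ^ 2)]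
      rw [Real.exp_neg]
      calc (Real.exp (r ^ 2 / σ ^ 2))⁻¹ ≤ (r ^ 2 / σ ^ 2)⁻¹ := inv_anti₀ hx h1
        _ = σ ^ 2 / r ^ 2 := by rw [inv_div]
    have hfout : ∀ θ : ℝ, r ^ 2 ≤ (θ - m) ^ 2 → f θ ≤ σ ^ 2 / r ^ 2 := by
      intro θ h
      refine le_trans ?_ hE
      rw [hfdef]
      apply Real.exp_le_exp.mpr
      apply neg_le_neg
      gcongr
    have hma' : m - r = a := by rw [hmdef, hrdef]; ring
    have hmb' : m + r = b := by rw [hmdef, hrdef]; ring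
    -- make all auxiliary quantities opaque to keep arithmetic tactics fast
    clear hae hEq hsplit hFTC hgπ hg0 hg'int hg'cont hgsmooth husmooth hvsmooth
    clear hKfcont hE
    clear_value f u v g
    clear hfdef hudef hvdef hgdef
    clear_value σ m r C a b L R ε
    clear hσdef hmdef hrdef hCdef hadef hbdef hLdef hRdef hεdef
    clear hball hδ hC₀
    clear hLR hL0 hRπ hLδ hRδ hθ₀0 hθ₀π hK₀ hθ₀
    clear hPpos hP hM hs hspos hs0 hsπ hKdef
    -- the quantitative bounds
    have hBnd : ∀ θ ∈ Set.Icc (0:ℝ) π, r ^ 2 ≤ (θ - m) ^ 2 →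
        -(C * (σ ^ 2 / r ^ 2)) ≤ K θ * f θ ^ 2 := by
      intro θ hθ hfar
      have h1 : f θ ≤ σ ^ 2 / r ^ 2 := hfout θ hfar
      have h2 : f θ ^ 2 ≤ σ ^ 2 / r ^ 2 := by
        nlinarith [mul_le_mul h1 (hfle1 θ) (hfpos θ).le
          (by positivity : (0:ℝ) ≤ σ ^ 2 / r ^ 2)]
      have h3 : -C ≤ K θ := (abs_le.mp (hCb θ hθ)).1
      have h4 := mul_le_mul_of_nonneg_right h3 (sq_nonneg (f θ))
      have h5 := mul_le_mul_of_nonneg_left h2 hC.le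
      linarith
    have hma : a ≤ m - σ := by linarith
    have hmb : m + σ ≤ b := by linarith
    have hmam : (m - σ : ℝ) ≤ m + σ := by linarith
    have hsub : ∀ {x y : ℝ}, 0 ≤ x → x ≤ y → y ≤ π →
        IntervalIntegrable (fun θ => K θ * f θ ^ 2) volume x y := by
      intro x y hx hxy hyπ
      exact hKfint.mono_set (by
        rw [Set.uIcc_of_le hπ.le, Set.uIcc_of_le hxy]
        exact Set.Icc_subset_Icc hx hyπ)
    have hI1 := hsub le_rfl ha0.le (by linarith : a ≤ π)
    have hI2 := hsub ha0.le hma (by linarith : m - σ ≤ π)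
    have hI3 := hsub (by linarith : (0:ℝ) ≤ m - σ) hmam (by linarith : m + σ ≤ π)
    have hI4 := hsub (by linarith : (0:ℝ) ≤ m + σ) hmb hbπ.le
    have hI5 := hsub (by linarith : (0:ℝ) ≤ b) hbπ.le le_rfl
    -- piece lower bounds
    have hX : (0:ℝ) ≤ C * (σ ^ 2 / r ^ 2) := by positivity
    have hJ1 : -(π * (C * (σ ^ 2 / r ^ 2))) ≤ ∫ θ in (0:ℝ)..a, K θ * f θ ^ 2 := by
      have hmono := intervalIntegral.integral_mono_on ha0.le
        (_root_.intervalIntegrable_const (c := -(C * (σ ^ 2 / r ^ 2)))) hI1 (fun x hx => by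
          apply hBnd x ⟨hx.1, by linarith [hx.2]⟩
          have hd : r ≤ m - x := by linarith [hx.2]
          nlinarith [hd, hr])
      rw [intervalIntegral.integral_const, smul_eq_mul] at hmono
      nlinarith [mul_le_mul_of_nonneg_right (by linarith : a ≤ π) hX]
    have hJ5 : -(π * (C * (σ ^ 2 / r ^ 2))) ≤ ∫ θ in b..π, K θ * f θ ^ 2 := by
      have hmono := intervalIntegral.integral_mono_on hbπ.le
        (_root_.intervalIntegrable_const (c := -(C * (σ ^ 2 / r ^ 2)))) hI5 (fun x hx => by
          apply hBnd x ⟨by linarith [hx.1], hx.2⟩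
          have hd : r ≤ x - m := by linarith [hx.1]
          nlinarith [hd, hr])
      rw [intervalIntegral.integral_const, smul_eq_mul] at hmono
      nlinarith [mul_le_mul_of_nonneg_right (by linarith : π - b ≤ π) hX]
    have hJ2 : (0:ℝ) ≤ ∫ θ in a..(m - σ), K θ * f θ ^ 2 :=
      intervalIntegral.integral_nonneg hma (fun x hx => le_of_lt (mul_pos
        (hε.trans (hKab x ⟨hx.1, by linarith [hx.2]⟩)) (pow_pos (hfpos x) 2)))
    have hJ4 : (0:ℝ) ≤ ∫ θ in (m + σ)..b, K θ * f θ ^ 2 :=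
      intervalIntegral.integral_nonneg hmb (fun x hx => le_of_lt (mul_pos
        (hε.trans (hKab x ⟨by linarith [hx.1], hx.2⟩)) (pow_pos (hfpos x) 2)))
    have hJ3 : 2 * σ * (ε * Real.exp (-1) ^ 2) ≤ ∫ θ in (m - σ)..(m + σ), K θ * f θ ^ 2 := by
      have hmono := intervalIntegral.integral_mono_on hmam
        (_root_.intervalIntegrable_const (c := ε * Real.exp (-1) ^ 2)) hI3 (fun x hx => by
          have hxab : x ∈ Set.Icc a b := ⟨by linarith [hx.1], by linarith [hx.2]⟩
          have hKx := hKab x hxab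
          have hnear : (x - m) ^ 2 ≤ σ ^ 2 := by nlinarith [hx.1, hx.2]
          have hf2 : Real.exp (-1) ^ 2 ≤ f x ^ 2 :=
            pow_le_pow_left₀ (Real.exp_pos _).le (hfin x hnear) 2
          have := mul_le_mul hKx.le hf2 (by positivity) (by linarith)
          linarith)
      rw [intervalIntegral.integral_const, smul_eq_mul] at hmono
      have harl : m + σ - (m - σ) = 2 * σ := by ring
      rw [harl] at hmono
      exact hmono
    -- splitting the integral
    have e1 := integral_add_adjacent_intervals hI1 hI2
    have e2 := integral_add_adjacent_intervals (hI1.trans hI2) hI3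
    have e3 := integral_add_adjacent_intervals ((hI1.trans hI2).trans hI3) hI4
    have e4 := integral_add_adjacent_intervals (((hI1.trans hI2).trans hI3).trans hI4) hI5
    -- the key numeric comparison
    have hexpinv : Real.exp (-1) ^ 2 = (Real.exp 2)⁻¹ := by
      rw [sq, ← Real.exp_add]
      rw [show (-1:ℝ) + -1 = -2 by norm_num, Real.exp_neg]
    have h1 : σ * (2 * C * π * Real.exp 2) ≤ ε * r ^ 2 := by
      rw [← le_div_iff₀ (by positivity)]
      exact hσ2
    have hkey : 2 * (π * (C * (σ ^ 2 / r ^ 2))) < 2 * σ * (ε * Real.exp (-1) ^ 2) := by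
      have goal' : 2 * π * C * σ ^ 2 * Real.exp 2 < 2 * σ * ε * r ^ 2 := by
        nlinarith [mul_le_mul_of_nonneg_left h1 hσ.le, mul_pos (mul_pos hσ hε) hr2]
      calc 2 * (π * (C * (σ ^ 2 / r ^ 2)))
          = 2 * π * C * σ ^ 2 * Real.exp 2 / (r ^ 2 * Real.exp 2) := by
            field_simp
        _ < 2 * σ * ε * r ^ 2 / (r ^ 2 * Real.exp 2) := by gcongr
        _ = 2 * σ * (ε * Real.exp (-1) ^ 2) := by
            rw [hexpinv]; field_simp
    linarith [hJ1, hJ2, hJ3, hJ4, hJ5, e1, e2, e3, e4, hkey]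
  · -- NEGATIVE PART: u = 1, v = 0
    refine ⟨fun _ => 1, fun _ => 0, contDiff_const, contDiff_const, rfl, rfl, ?_⟩
    have heq : (∫ θ in (0:ℝ)..π,
        (-(P θ / 2) * (((1:ℝ))^2 + ((0:ℝ))^2) + (M θ / 2) * ((0:ℝ))^2
          + s θ * deriv (fun _ => (1:ℝ)) θ * 0))
        = ∫ θ in (0:ℝ)..π, -(P θ / 2) := by
      apply intervalIntegral.integral_congr
      intro θ _
      simp
    rw [heq, intervalIntegral.integral_neg]
    have hPint : IntervalIntegrable (fun θ => P θ / 2) volume 0 π :=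
      ((hP.div_const 2).mono (by rw [Set.uIcc_of_le hπ.le])).intervalIntegrable
    have : 0 < ∫ θ in (0:ℝ)..π, P θ / 2 :=
      intervalIntegral_pos_of_pos_on hPint (fun x hx => by linarith [hPpos x hx]) hπ
    linarith
end
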